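/- Let D be a unitary representation of a group G on ℂⁿ and let H : ℝ³ → Matₙ(ℂ). If H(k) = Σ_κ Σ_{μ,ν} a_{κμν} Σ_l X_l^{κ,μ} conj(f_l^{κ,ν}(k)) where for each g ∈ G, D(g) X_l^{κ,μ} D(g)⁻¹ = Σ_{l'} X_{l'}^{κ,μ} D^κ(g)_{l'l} and f_l^{κ,ν}(g⁻¹k) = Σ_{l'} f_{l'}^{κ,ν}(k) D^κ(g)_{l'l} with each D^κ(g) a unitary matrix, then H satisfies the symmetry constraint H(k) = D(g) H(g⁻¹k) D(g)⁻¹ for all g ∈ G and all k. -/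

import Mathlib

open Matrix
open scoped ComplexConjugate

theorem Matrix.UnitaryGroup.sum_conj_smul_sum_smul {R M ι : Type*} [CommRing R] [StarRing R]
    [AddCommMonoid M] [Module R M] [Fintype ι] [DecidableEq ι]
    (U : unitaryGroup ι R) (c : ι → R) (x : ι → M) :
    ∑ l, conj (∑ l', (U : Matrix ι ι R) l' l * c l') • ∑ l', (U : Matrix ι ι R) l' l • x l'
      = ∑ l, conj (c l) • x l := by
  have hU : (U : Matrix ι ι R) *ᵥ star (c ᵥ* U) = star c := by
    rw [star_vecMul, mulVec_mulVec, ← star_eq_conjTranspose,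
      Unitary.mul_star_self_of_mem U.2, one_mulVec]
  have hcoeff : ∀ l', ∑ l, conj (∑ l'', (U : Matrix ι ι R) l'' l * c l'') * (U : Matrix ι ι R) l' l
      = conj (c l') := fun l' => by
    simpa [mulVec, dotProduct, vecMul, mul_comm, starRingEnd_apply] using congrFun hU l'
  simp only [Finset.smul_sum, smul_smul]
  rw [Finset.sum_comm]
  simp only [← Finset.sum_smul, hcoeff]

/-- If the Hamiltonian H is expanded as H(k) = Σ_{κ,μ,ν} a_{κμν} Σ_l X_l^{κ,μ} conj(f_l^{κ,ν}(k)),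
where the matrix families X^{κ,μ} and function families f^{κ,ν} both transform under g ∈ G
by the same unitary matrices D^κ(g), then H satisfies the symmetry constraint
H(k) = D(g) H(g⁻¹k) D(g)⁻¹ for all g ∈ G and k ∈ ℝ³. -/
theorem stmt_6 {G : Type*} [Group G] {n : ℕ}
    (φ : G →* ((Fin 3 → ℝ) ≃ₗ[ℝ] (Fin 3 → ℝ)))
    (D : G →* Matrix.unitaryGroup (Fin n) ℂ)
    {K : Type*} [Fintype K] (d : K → ℕ)
    (Dκ : (κ : K) → G →* Matrix.unitaryGroup (Fin (d κ)) ℂ)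
    (μIdx νIdx : K → Type*) [∀ κ, Fintype (μIdx κ)] [∀ κ, Fintype (νIdx κ)]
    (a : (κ : K) → μIdx κ → νIdx κ → ℝ)
    (X : (κ : K) → μIdx κ → Fin (d κ) → Matrix (Fin n) (Fin n) ℂ)
    (f : (κ : K) → νIdx κ → Fin (d κ) → (Fin 3 → ℝ) → ℂ)
    (hX : ∀ (g : G) (κ : K) (μ : μIdx κ) (l : Fin (d κ)),
      (D g : Matrix (Fin n) (Fin n) ℂ) * X κ μ l * ((D g)⁻¹ : Matrix.unitaryGroup (Fin n) ℂ)
        = ∑ l', ((Dκ κ g : Matrix (Fin (d κ)) (Fin (d κ)) ℂ) l' l) • X κ μ l')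
    (hf : ∀ (g : G) (κ : K) (ν : νIdx κ) (l : Fin (d κ)) (k : Fin 3 → ℝ),
      f κ ν l ((φ g).symm k)
        = ∑ l', ((Dκ κ g : Matrix (Fin (d κ)) (Fin (d κ)) ℂ) l' l) * f κ ν l' k)
    (H : (Fin 3 → ℝ) → Matrix (Fin n) (Fin n) ℂ)
    (hH : ∀ k, H k = ∑ κ, ∑ μ : μIdx κ, ∑ ν : νIdx κ,
      (a κ μ ν : ℂ) • ∑ l, conj (f κ ν l k) • X κ μ l) :
    ∀ (g : G) (k : Fin 3 → ℝ),
      H k = (D g : Matrix (Fin n) (Fin n) ℂ) * H ((φ g).symm k)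
              * ((D g)⁻¹ : Matrix.unitaryGroup (Fin n) ℂ) := by
  intro g k
  have hconj : (D g : Matrix (Fin n) (Fin n) ℂ) * H ((φ g).symm k)
        * ((D g)⁻¹ : Matrix.unitaryGroup (Fin n) ℂ)
      = ∑ κ, ∑ μ : μIdx κ, ∑ ν : νIdx κ, (a κ μ ν : ℂ) • ∑ l, conj (f κ ν l ((φ g).symm k)) •
          ((D g : Matrix (Fin n) (Fin n) ℂ) * X κ μ l
            * ((D g)⁻¹ : Matrix.unitaryGroup (Fin n) ℂ)) := by
    simp only [hH, Finset.mul_sum, Finset.sum_mul, mul_smul_comm, smul_mul_assoc]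
  rw [hconj, hH]
  simp only [hX, hf, Matrix.UnitaryGroup.sum_conj_smul_sum_smul]
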